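/- arXiv:2301.11369 — 4 statements merged into one kernel-verified Lean document; each statement's English description precedes it below -/
import Mathlib

section
/- Let q > 1 be a real number and λ₁, λ₂ ∈ ℂ. Suppose f assigns a complex value to each symbol ε₀, ε_d (d ≥ 1), ε_{d₁,d₂} (1 ≤ d₁ ≤ d₂), and satisfies the eight relations: λ₁ f(ε₀) = (q²+q+1) f(ε_{1,1}); λ₁ f(ε_d) = (q²+q) f(ε_{1,d+1}) + f(ε_{d-1}); λ₁ f(ε_{d,d}) = q² f(ε_{d+1,d+1}) + (q+1) f(ε_{d-1,d}); λ₁ f(ε_{d₁,d₂}) = q² f(ε_{d₁+1,d₂+1}) + f(ε_{d₁,d₂-1}) + q f(ε_{d₁-1,d₂}) for d₁ < d₂; λ₂ f(ε₀) = (q²+q+1) f(ε₁); λ₂ f(ε_d) = q² f(ε_{d+1}) + (q+1) f(ε_{1,d}); λ₂ f(ε_{d,d}) = (q²+q) f(ε_{d,d+1}) + f(ε_{d-1,d-1}); λ₂ f(ε_{d₁,d₂}) = q f(ε_{d₁+1,d₂}) + q² f(ε_{d₁,d₂+1}) + f(ε_{d₁-1,d₂-1}) for d₁ < d₂ (with the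 conventions ε_0 = ε_{0,0}, ε_{0,d} = ε_d). Then f is uniquely determined by λ₁, λ₂ and the value f(ε₀); in particular the space of such f is at most 1-dimensional. -/
/-- The eight recurrence relations satisfied by an unramified `Φ_{x,1}`, `Φ_{x,2}`
eigenform `f` (with eigenvalues `l1`, `l2`) for `PGL₃` over `P¹` at a degree one place
`x`, via the graphs of Hecke operators on `PBun₃(P¹)`.  Indices: `f d₁ d₂` is the value
at `ε_{d₁,d₂}` = class of `O ⊕ O(d₁) ⊕ O(d₂)` (so `ε₀ = f 0 0`, `ε_d = f 0 d`),
meaningful for `0 ≤ d₁ ≤ d₂`. -/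
def HeckeRel (q : ℝ) (l1 l2 : ℂ) (f : ℕ → ℕ → ℂ) : Prop :=
  (l1 * f 0 0 = ((q : ℂ) ^ 2 + q + 1) * f 1 1) ∧
  (∀ d : ℕ, 1 ≤ d → l1 * f 0 d = ((q : ℂ) ^ 2 + q) * f 1 (d + 1) + f 0 (d - 1)) ∧
  (∀ d : ℕ, 1 ≤ d →
    l1 * f d d = (q : ℂ) ^ 2 * f (d + 1) (d + 1) + ((q : ℂ) + 1) * f (d - 1) d) ∧
  (∀ d1 d2 : ℕ, 1 ≤ d1 → d1 < d2 →
    l1 * f d1 d2 = (q : ℂ) ^ 2 * f (d1 + 1) (d2 + 1) + f d1 (d2 - 1)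
      + (q : ℂ) * f (d1 - 1) d2) ∧
  (l2 * f 0 0 = ((q : ℂ) ^ 2 + q + 1) * f 0 1) ∧
  (∀ d : ℕ, 1 ≤ d → l2 * f 0 d = (q : ℂ) ^ 2 * f 0 (d + 1) + ((q : ℂ) + 1) * f 1 d) ∧
  (∀ d : ℕ, 1 ≤ d →
    l2 * f d d = ((q : ℂ) ^ 2 + q) * f d (d + 1) + f (d - 1) (d - 1)) ∧
  (∀ d1 d2 : ℕ, 1 ≤ d1 → d1 < d2 →
    l2 * f d1 d2 = (q : ℂ) * f (d1 + 1) d2 + (q : ℂ) ^ 2 * f d1 (d2 + 1)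
      + f (d1 - 1) (d2 - 1))

/-- a solution `f` of the eight relations is uniquely determined by
`λ₁, λ₂` and the value `f(ε₀)`; in particular the space of such `f` is at most
1-dimensional. -/
theorem stmt_4 (q : ℝ) (hq : 1 < q) (l1 l2 : ℂ) (f g : ℕ → ℕ → ℂ)
    (hf : HeckeRel q l1 l2 f) (hg : HeckeRel q l1 l2 g) (h0 : f 0 0 = g 0 0) :
    ∀ d1 d2 : ℕ, d1 ≤ d2 → f d1 d2 = g d1 d2 := by
  obtain ⟨hf1, hf2, hf3, hf4, hf5, hf6, hf7, hf8⟩ := hf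
  obtain ⟨hg1, hg2, hg3, hg4, hg5, hg6, hg7, hg8⟩ := hg
  have hq0 : (0:ℝ) < q := lt_trans one_pos hq
  have hA : ((q:ℂ)^2 + q + 1) ≠ 0 := by
    have h : (q^2 + q + 1 : ℝ) ≠ 0 := by positivity
    exact_mod_cast h
  have hB : ((q:ℂ)^2 + q) ≠ 0 := by
    have h : (q^2 + q : ℝ) ≠ 0 := by positivity
    exact_mod_cast h
  have hC : ((q:ℂ)^2) ≠ 0 := by
    have h : (q^2 : ℝ) ≠ 0 := by positivity
    exact_mod_cast h
  have h01 : f 0 1 = g 0 1 :=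
    mul_left_cancel₀ hA (by linear_combination -hf5 + hg5 + l2 * h0)
  have h11 : f 1 1 = g 1 1 :=
    mul_left_cancel₀ hA (by linear_combination -hf1 + hg1 + l1 * h0)
  have Q : ∀ n : ℕ, f 0 n = g 0 n ∧ f 0 (n+1) = g 0 (n+1) ∧ f 1 (n+1) = g 1 (n+1) := by
    intro n
    induction n with
    | zero => exact ⟨h0, h01, h11⟩
    | succ n ih =>
      obtain ⟨ha, hb, hc⟩ := ih
      have h1n2 : f 1 (n+1+1) = g 1 (n+1+1) := by
        have hf' := hf2 (n+1) (by omega)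
        have hg' := hg2 (n+1) (by omega)
        simp only [Nat.add_sub_cancel] at hf' hg'
        exact mul_left_cancel₀ hB (by linear_combination -hf' + hg' + l1 * hb - ha)
      have h0n2 : f 0 (n+1+1) = g 0 (n+1+1) := by
        have hf' := hf6 (n+1) (by omega)
        have hg' := hg6 (n+1) (by omega)
        exact mul_left_cancel₀ hC
          (by linear_combination -hf' + hg' + l2 * hb - ((q:ℂ)+1) * hc)
      exact ⟨hb, h0n2, h1n2⟩
  have S : ∀ k : ℕ, (∀ d2, k ≤ d2 → f k d2 = g k d2) ∧
      (∀ d2, k+1 ≤ d2 → f (k+1) d2 = g (k+1) d2) := by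
    intro k
    induction k with
    | zero =>
      constructor
      · intro d2 _; exact (Q d2).1
      · intro d2 hd2
        obtain ⟨d, rfl⟩ : ∃ d, d2 = d + 1 := ⟨d2 - 1, by omega⟩
        exact (Q d).2.2
    | succ k ih =>
      refine ⟨ih.2, ?_⟩
      intro d2 hd2
      obtain ⟨e, rfl⟩ : ∃ e, d2 = e + 1 := ⟨d2 - 1, by omega⟩
      have he : k + 1 ≤ e := by omega
      rcases eq_or_lt_of_le he with heq | hlt
      · subst heq
        have hf' := hf3 (k+1) (by omega)
        have hg' := hg3 (k+1) (by omega)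
        simp only [Nat.add_sub_cancel] at hf' hg'
        have hdiag := ih.2 (k+1) le_rfl
        have hoff := ih.1 (k+1) (by omega)
        exact mul_left_cancel₀ hC
          (by linear_combination -hf' + hg' + l1 * hdiag - ((q:ℂ)+1) * hoff)
      · have hf' := hf4 (k+1) e (by omega) hlt
        have hg' := hg4 (k+1) e (by omega) hlt
        simp only [Nat.add_sub_cancel] at hf' hg'
        have h1 := ih.2 e (by omega)
        have h2 := ih.2 (e-1) (by omega)
        have h3 := ih.1 e (by omega)
        exact mul_left_cancel₀ hC
          (by linear_combination -hf' + hg' + l1 * h1 - h2 - (q:ℂ) * h3)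
  intro d1 d2 hd
  exact (S d1).1 d2 hd
end

section
/- With the same recurrence setup as in the Φ_{x,1}, Φ_{x,2} eigenform relations for PGL₃ over P¹: if f satisfies all eight relations and f(ε₀) = 0, then f is identically zero. -/
/-- if `f` satisfies all eight relations and `f(ε₀) = 0`, then `f` is
identically zero (on the index set `0 ≤ d₁ ≤ d₂`). -/
theorem stmt_5 (q : ℝ) (hq : 1 < q) (l1 l2 : ℂ) (f : ℕ → ℕ → ℂ)
    (hf : HeckeRel q l1 l2 f) (h0 : f 0 0 = 0) :
    ∀ d1 d2 : ℕ, d1 ≤ d2 → f d1 d2 = 0 := by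
  obtain ⟨h1, h2, h3, h4, h5, h6, -, -⟩ := hf
  have hq0 : (0:ℝ) < q := lt_trans one_pos hq
  have hA : ((q:ℂ) ^ 2 + q + 1) ≠ 0 := by
    have h : ((q:ℂ) ^ 2 + q + 1) = ((q ^ 2 + q + 1 : ℝ) : ℂ) := by push_cast; ring
    rw [h]
    exact_mod_cast ne_of_gt (by positivity : (0:ℝ) < q ^ 2 + q + 1)
  have hB : ((q:ℂ) ^ 2 + q) ≠ 0 := by
    have h : ((q:ℂ) ^ 2 + q) = ((q ^ 2 + q : ℝ) : ℂ) := by push_cast; ring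
    rw [h]
    exact_mod_cast ne_of_gt (by positivity : (0:ℝ) < q ^ 2 + q)
  have hC : ((q:ℂ) ^ 2) ≠ 0 := by
    have : (q:ℂ) ≠ 0 := by exact_mod_cast ne_of_gt hq0
    exact pow_ne_zero 2 this
  have key : ∀ d2 : ℕ, ∀ d1, d1 ≤ d2 → f d1 d2 = 0 := by
    intro d2
    induction d2 using Nat.strong_induction_on with
    | _ d2 ih =>
      match d2 with
      | 0 =>
        intro d1 hd
        interval_cases d1
        exact h0
      | 1 =>
        intro d1 hd
        interval_cases d1
        · rw [h0, mul_zero] at h5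
          exact (mul_eq_zero.mp h5.symm).resolve_left hA
        · rw [h0, mul_zero] at h1
          exact (mul_eq_zero.mp h1.symm).resolve_left hA
      | (n+2) =>
        intro d1 hd
        have z0 : f 0 (n+1) = 0 := ih (n+1) (by omega) 0 (by omega)
        have z1 : f 1 (n+1) = 0 := ih (n+1) (by omega) 1 (by omega)
        match d1 with
        | 0 =>
          have h := h6 (n+1) (by omega)
          rw [z0, z1, mul_zero, mul_zero, add_zero] at h
          exact (mul_eq_zero.mp h.symm).resolve_left hC
        | 1 =>
          have h := h2 (n+1) (by omega)
          have zn : f 0 ((n+1)-1) = 0 := ih ((n+1)-1) (by omega) 0 (by omega)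
          rw [z0, zn, mul_zero, add_zero] at h
          exact (mul_eq_zero.mp h.symm).resolve_left hB
        | (k+2) =>
          by_cases hk : k = n
          · subst hk
            have h := h3 (k+1) (by omega)
            have za : f (k+1) (k+1) = 0 := ih (k+1) (by omega) (k+1) le_rfl
            have zb : f ((k+1)-1) (k+1) = 0 := ih (k+1) (by omega) ((k+1)-1) (by omega)
            rw [za, zb, mul_zero, mul_zero, add_zero] at h
            exact (mul_eq_zero.mp h.symm).resolve_left hC
          · have hk' : k < n := by omega
            have h := h4 (k+1) (n+1) (by omega) (by omega)
            have za : f (k+1) (n+1) = 0 := ih (n+1) (by omega) (k+1) (by omega)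
            have zb : f (k+1) ((n+1)-1) = 0 := ih ((n+1)-1) (by omega) (k+1) (by omega)
            have zc : f ((k+1)-1) (n+1) = 0 := ih (n+1) (by omega) ((k+1)-1) (by omega)
            rw [za, zb, zc, mul_zero, mul_zero, add_zero, add_zero] at h
            exact (mul_eq_zero.mp h.symm).resolve_left hC
  intro d1 d2 hd
  exact key d2 d1 hd
end

section
/- Let q > 1 and λ₁, λ₂ ∈ ℂ, and let f satisfy the eight PGL₃ Hecke eigenform recurrences. Then for all d ≥ 1, f(ε_{d+1,d+1}) = (1/q²)·(λ₁ f(ε_{d,d}) − (q+1)/(q²+q)·(λ₂ f(ε_{d−1,d−1}) − f(ε_{d−2,d−2}))), where f(ε_{−1,−1}) is interpreted via the base case λ₁ f(ε_{0,0}) = (q²+q+1) f(ε_{1,1}). -/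
lemma ofReal_sq_add_self_add_one_ne_zero (q : ℝ) : (q : ℂ) ^ 2 + q + 1 ≠ 0 := by
  have : 0 < q ^ 2 + q + 1 := by nlinarith [sq_nonneg (q + 1 / 2)]
  exact_mod_cast this.ne'

namespace HeckeRel

variable {q : ℝ} {l1 l2 : ℂ} {f : ℕ → ℕ → ℂ}

lemma eq_zero_one (hf : HeckeRel q l1 l2 f) : f 0 1 = l2 * f 0 0 / ((q : ℂ) ^ 2 + q + 1) := by
  rw [hf.2.2.2.2.1, mul_div_cancel_left₀ _ (ofReal_sq_add_self_add_one_ne_zero q)]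

lemma eq_above_diag (hf : HeckeRel q l1 l2 f) (hq : (q : ℂ) ^ 2 + q ≠ 0) (d : ℕ) :
    f (d + 1) (d + 2) = (l2 * f (d + 1) (d + 1) - f d d) / ((q : ℂ) ^ 2 + q) := by
  rw [hf.2.2.2.2.2.2.1 (d + 1) le_add_self, Nat.add_sub_cancel, add_sub_cancel_right,
    mul_div_cancel_left₀ _ hq]

lemma eq_diag_add_two (hf : HeckeRel q l1 l2 f) (hq : (q : ℂ) ≠ 0) (d : ℕ) :
    f (d + 2) (d + 2) =
      (l1 * f (d + 1) (d + 1) - ((q : ℂ) + 1) * f d (d + 1)) / (q : ℂ) ^ 2 := by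
  rw [hf.2.2.1 (d + 1) le_add_self, Nat.add_sub_cancel, add_sub_cancel_right,
    mul_div_cancel_left₀ _ (pow_ne_zero 2 hq)]

end HeckeRel

/-- for all `d ≥ 2`,
`f(ε_{d+1,d+1}) = (1/q²)(λ₁ f(ε_{d,d}) − (q+1)/(q²+q)·(λ₂ f(ε_{d−1,d−1}) − f(ε_{d−2,d−2})))`,
and for `d = 1` the formula holds with `(λ₂ f(ε_{0,0}) − f(ε_{−1,−1}))` interpreted via
the base case, which gives `f(ε_{2,2}) = (1/q²)(λ₁ f(ε_{1,1}) − (q+1) λ₂ f(ε_{0,0})/(q²+q+1))`. -/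
theorem stmt_10 (q : ℝ) (hq : 1 < q) (l1 l2 : ℂ) (f : ℕ → ℕ → ℂ)
    (hf : HeckeRel q l1 l2 f) :
    (f 2 2 = (1 / (q : ℂ) ^ 2) *
      (l1 * f 1 1 - ((q : ℂ) + 1) * (l2 * f 0 0) / ((q : ℂ) ^ 2 + q + 1))) ∧
    (∀ d : ℕ, 2 ≤ d →
      f (d + 1) (d + 1) = (1 / (q : ℂ) ^ 2) * (l1 * f d d
        - (((q : ℂ) + 1) / ((q : ℂ) ^ 2 + q)) *
          (l2 * f (d - 1) (d - 1) - f (d - 2) (d - 2)))) := by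
  have hq0 : (q : ℂ) ≠ 0 := by exact_mod_cast (zero_lt_one.trans hq).ne'
  have hqq : (q : ℂ) ^ 2 + q ≠ 0 := by
    have : 0 < q ^ 2 + q := by positivity
    exact_mod_cast this.ne'
  refine ⟨?_, fun d hd => ?_⟩
  · rw [hf.eq_diag_add_two hq0 0, zero_add, hf.eq_zero_one]
    ring
  · obtain ⟨e, rfl⟩ := Nat.exists_eq_add_of_le' hd
    rw [show e + 2 - 1 = e + 1 from rfl, Nat.add_sub_cancel, hf.eq_diag_add_two hq0 (e + 1),
      hf.eq_above_diag hqq e]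
    ring
end

section
/- The solution space of the PGL₃ Hecke eigenform recurrence system is exactly 1-dimensional for every choice of parameters (q, λ₁, λ₂) with q > 1: the map sending f to f(ε₀) is a linear isomorphism from the space of solutions onto ℂ (injectivity by the determination theorem; surjectivity because the recurrences can be solved forward consistently). -/
/-- `heckeOp₁ q` and `heckeOp₂ q` are `Φ_{x,1}` and `Φ_{x,2}`, read off the right-hand sides of
`HeckeRel`; their values at `d₁ > d₂` are junk. -/
noncomputable def heckeOp₁ (q : ℝ) : (ℕ → ℕ → ℂ) →ₗ[ℂ] ℕ → ℕ → ℂ where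
  toFun f d1 d2 :=
    if d1 = 0 then
      if d2 = 0 then ((q : ℂ) ^ 2 + q + 1) * f 1 1
      else ((q : ℂ) ^ 2 + q) * f 1 (d2 + 1) + f 0 (d2 - 1)
    else if d1 = d2 then (q : ℂ) ^ 2 * f (d1 + 1) (d1 + 1) + ((q : ℂ) + 1) * f (d1 - 1) d1
    else (q : ℂ) ^ 2 * f (d1 + 1) (d2 + 1) + f d1 (d2 - 1) + (q : ℂ) * f (d1 - 1) d2
  map_add' f g := by ext d1 d2; simp only [Pi.add_apply]; split_ifs <;> ring
  map_smul' c f := by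
    ext d1 d2; simp only [Pi.smul_apply, smul_eq_mul, RingHom.id_apply]; split_ifs <;> ring

noncomputable def heckeOp₂ (q : ℝ) : (ℕ → ℕ → ℂ) →ₗ[ℂ] ℕ → ℕ → ℂ where
  toFun f d1 d2 :=
    if d1 = 0 then
      if d2 = 0 then ((q : ℂ) ^ 2 + q + 1) * f 0 1
      else (q : ℂ) ^ 2 * f 0 (d2 + 1) + ((q : ℂ) + 1) * f 1 d2
    else if d1 = d2 then ((q : ℂ) ^ 2 + q) * f d1 (d1 + 1) + f (d1 - 1) (d1 - 1)
    else (q : ℂ) * f (d1 + 1) d2 + (q : ℂ) ^ 2 * f d1 (d2 + 1) + f (d1 - 1) (d2 - 1)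
  map_add' f g := by ext d1 d2; simp only [Pi.add_apply]; split_ifs <;> ring
  map_smul' c f := by
    ext d1 d2; simp only [Pi.smul_apply, smul_eq_mul, RingHom.id_apply]; split_ifs <;> ring

theorem heckeRel_iff {q : ℝ} {l1 l2 : ℂ} {f : ℕ → ℕ → ℂ} :
    HeckeRel q l1 l2 f ↔ ∀ d1 d2, d1 ≤ d2 →
      heckeOp₁ q f d1 d2 = l1 * f d1 d2 ∧ heckeOp₂ q f d1 d2 = l2 * f d1 d2 := by
  simp only [heckeOp₁, heckeOp₂, LinearMap.coe_mk, AddHom.coe_mk]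
  constructor
  · rintro ⟨h1, h2, h3, h4, h5, h6, h7, h8⟩ d1 d2 hd
    constructor
    · split_ifs with ha hb hab
      · subst ha hb; exact h1.symm
      · subst ha; exact (h2 d2 (by omega)).symm
      · subst hab; exact (h3 d1 (by omega)).symm
      · exact (h4 d1 d2 (by omega) (by omega)).symm
    · split_ifs with ha hb hab
      · subst ha hb; exact h5.symm
      · subst ha; exact (h6 d2 (by omega)).symm
      · subst hab; exact (h7 d1 (by omega)).symm
      · exact (h8 d1 d2 (by omega) (by omega)).symm
  · intro h
    have hne {d : ℕ} (hd : 1 ≤ d) : d ≠ 0 := by omega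
    refine ⟨(h 0 0 le_rfl).1.symm, fun d hd => ?_, fun d hd => ?_, fun d1 d2 hd1 hd2 => ?_,
      (h 0 0 le_rfl).2.symm, fun d hd => ?_, fun d hd => ?_, fun d1 d2 hd1 hd2 => ?_⟩
    · simpa [hne hd] using (h 0 d (by omega)).1.symm
    · simpa [hne hd] using (h d d le_rfl).1.symm
    · simpa [hne hd1, hd2.ne] using (h d1 d2 hd2.le).1.symm
    · simpa [hne hd] using (h 0 d (by omega)).2.symm
    · simpa [hne hd] using (h d d le_rfl).2.symm
    · simpa [hne hd1, hd2.ne] using (h d1 d2 hd2.le).2.symm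

theorem heckeOp₁_heckeOp₂_comm (q : ℝ) (f : ℕ → ℕ → ℂ) {d1 d2 : ℕ} (hd : d1 ≤ d2) :
    heckeOp₁ q (heckeOp₂ q f) d1 d2 = heckeOp₂ q (heckeOp₁ q f) d1 d2 := by
  obtain ⟨k, rfl⟩ := Nat.exists_eq_add_of_le hd
  rcases d1 with _ | _ | d1 <;> rcases k with _ | _ | k <;>
    simp [heckeOp₁, heckeOp₂, ← add_assoc] <;> (try split_ifs) <;> first | omega | ring

theorem heckeOp₂_congr (q : ℝ) {f g : ℕ → ℕ → ℂ} (hfg : ∀ d1 d2, d1 ≤ d2 → f d1 d2 = g d1 d2)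
    {d1 d2 : ℕ} (hd : d1 ≤ d2) : heckeOp₂ q f d1 d2 = heckeOp₂ q g d1 d2 := by
  simp only [heckeOp₂, LinearMap.coe_mk, AddHom.coe_mk]
  split_ifs <;> simp (disch := omega) only [hfg]

section Determination

variable {q : ℝ} {h : ℕ → ℕ → ℂ} {b : ℕ}

theorem ofReal_sq_add_add_one_ne_zero (hq : 0 < q) : (q : ℂ) ^ 2 + q + 1 ≠ 0 := by
  exact_mod_cast (by positivity : (0 : ℝ) < q ^ 2 + q + 1).ne'

theorem ofReal_sq_add_ne_zero (hq : 0 < q) : (q : ℂ) ^ 2 + q ≠ 0 := by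
  exact_mod_cast (by positivity : (0 : ℝ) < q ^ 2 + q).ne'

theorem ofReal_sq_ne_zero (hq : 0 < q) : (q : ℂ) ^ 2 ≠ 0 := by
  exact_mod_cast (by positivity : (0 : ℝ) < q ^ 2).ne'

theorem apply_succ_succ_eq_zero_of_heckeOp₁ (hq : 0 < q)
    (hh : ∀ d1 d2, d1 ≤ d2 → d2 ≤ b → h d1 d2 = 0) {a : ℕ} (hab : a ≤ b)
    (hT : heckeOp₁ q h a b = 0) : h (a + 1) (b + 1) = 0 := by
  simp only [heckeOp₁, LinearMap.coe_mk, AddHom.coe_mk] at hT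
  split_ifs at hT with ha hb had
  · subst ha hb
    simpa [ofReal_sq_add_add_one_ne_zero hq] using hT
  · subst ha
    simpa [ofReal_sq_add_ne_zero hq, hh 0 (b - 1) (by omega) (by omega)] using hT
  · subst had
    simpa [ofReal_sq_ne_zero hq, hh (a - 1) a (by omega) le_rfl] using hT
  · simpa [ofReal_sq_ne_zero hq, hh a (b - 1) (by omega) (by omega),
      hh (a - 1) b (by omega) le_rfl] using hT

theorem apply_zero_succ_eq_zero_of_heckeOp₂ (hq : 0 < q)
    (hh : ∀ d1 d2, d1 ≤ d2 → d2 ≤ b → h d1 d2 = 0) (hT : heckeOp₂ q h 0 b = 0) :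
    h 0 (b + 1) = 0 := by
  simp only [heckeOp₂, LinearMap.coe_mk, AddHom.coe_mk, if_true] at hT
  split_ifs at hT with hb
  · subst hb
    simpa [ofReal_sq_add_add_one_ne_zero hq] using hT
  · simpa [ofReal_sq_ne_zero hq, hh 1 b (by omega) le_rfl] using hT

theorem eq_zero_of_heckeOp₁_eq_smul (hq : 0 < q) {l1 : ℂ}
    (hT : ∀ d1 d2, d1 ≤ d2 → heckeOp₁ q h d1 d2 = l1 * h d1 d2) (h00 : h 0 0 = 0)
    (hrow : ∀ b, (∀ d1 d2, d1 ≤ d2 → d2 ≤ b → h d1 d2 = 0) → h 0 (b + 1) = 0) :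
    ∀ d1 d2, d1 ≤ d2 → h d1 d2 = 0 := by
  suffices ∀ n d1 d2, d1 ≤ d2 → d2 ≤ n → h d1 d2 = 0 from fun d1 d2 hd => this d2 d1 d2 hd le_rfl
  intro n
  induction n with
  | zero =>
    intro d1 d2 hd hd2
    obtain ⟨rfl, rfl⟩ : d1 = 0 ∧ d2 = 0 := by omega
    exact h00
  | succ n ih =>
    intro d1 d2 hd hd2
    rcases Nat.lt_or_ge d2 (n + 1) with hlt | hge
    · exact ih d1 d2 hd (by omega)
    obtain rfl : d2 = n + 1 := by omega
    rcases d1 with _ | a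
    · exact hrow n ih
    · refine apply_succ_succ_eq_zero_of_heckeOp₁ hq ih (by omega) ?_
      rw [hT a n (by omega), ih a n (by omega) le_rfl, mul_zero]

theorem eq_zero_of_heckeOp_eq_smul (hq : 0 < q) {l1 l2 : ℂ}
    (h₁ : ∀ d1 d2, d1 ≤ d2 → heckeOp₁ q h d1 d2 = l1 * h d1 d2)
    (h₂ : ∀ d1 d2, d1 ≤ d2 → heckeOp₂ q h d1 d2 = l2 * h d1 d2) (h00 : h 0 0 = 0) :
    ∀ d1 d2, d1 ≤ d2 → h d1 d2 = 0 :=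
  eq_zero_of_heckeOp₁_eq_smul hq h₁ h00 fun b hb =>
    apply_zero_succ_eq_zero_of_heckeOp₂ hq hb <| by
      rw [h₂ 0 b b.zero_le, hb 0 b b.zero_le le_rfl, mul_zero]

end Determination

theorem heckeOp₂_eq_smul_of_heckeOp₁_eq_smul {q : ℝ} (hq : 0 < q) {l1 l2 : ℂ}
    {f : ℕ → ℕ → ℂ} (h₁ : ∀ d1 d2, d1 ≤ d2 → heckeOp₁ q f d1 d2 = l1 * f d1 d2)
    (h₂ : ∀ d, heckeOp₂ q f 0 d = l2 * f 0 d) {d1 d2 : ℕ} (hd : d1 ≤ d2) :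
    heckeOp₂ q f d1 d2 = l2 * f d1 d2 := by
  have hg : ∀ d1 d2, d1 ≤ d2 →
      heckeOp₁ q (l2 • f - heckeOp₂ q f) d1 d2 = l1 * (l2 • f - heckeOp₂ q f) d1 d2 := by
    intro d1 d2 hd
    have h₁₂ : heckeOp₂ q (heckeOp₁ q f) d1 d2 = heckeOp₂ q (l1 • f) d1 d2 :=
      heckeOp₂_congr q h₁ hd
    simp only [map_sub, map_smul, Pi.sub_apply, Pi.smul_apply, smul_eq_mul, h₁ d1 d2 hd,
      heckeOp₁_heckeOp₂_comm q f hd, h₁₂]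
    ring
  have hrow : ∀ d, (l2 • f - heckeOp₂ q f) 0 d = 0 := fun d => by
    simp [h₂ d]
  have := eq_zero_of_heckeOp₁_eq_smul hq hg (hrow 0) (fun b _ => hrow (b + 1)) d1 d2 hd
  simp only [Pi.sub_apply, Pi.smul_apply, smul_eq_mul, sub_eq_zero] at this
  exact this.symm

noncomputable def heckeSeries (q : ℝ) (l1 l2 c : ℂ) : ℕ → ℕ → ℂ
  | 0, 0 => c
  | 0, 1 => l2 * c / ((q : ℂ) ^ 2 + q + 1)
  | 0, d + 2 =>
    (l2 * heckeSeries q l1 l2 c 0 (d + 1) - ((q : ℂ) + 1) * heckeSeries q l1 l2 c 1 (d + 1))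
      / (q : ℂ) ^ 2
  | 1, 1 => l1 * c / ((q : ℂ) ^ 2 + q + 1)
  | 1, d + 2 =>
    (l1 * heckeSeries q l1 l2 c 0 (d + 1) - heckeSeries q l1 l2 c 0 d) / ((q : ℂ) ^ 2 + q)
  | a + 2, b + 2 =>
    if a = b then
      (l1 * heckeSeries q l1 l2 c (a + 1) (b + 1) - ((q : ℂ) + 1) * heckeSeries q l1 l2 c a (b + 1))
        / (q : ℂ) ^ 2
    else
      (l1 * heckeSeries q l1 l2 c (a + 1) (b + 1) - heckeSeries q l1 l2 c (a + 1) b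
        - (q : ℂ) * heckeSeries q l1 l2 c a (b + 1)) / (q : ℂ) ^ 2
  | _, _ => 0

section HeckeSeries

variable {q : ℝ} {l1 l2 c : ℂ}

theorem heckeOp₁_heckeSeries (hq : 0 < q) {d1 d2 : ℕ} (hd : d1 ≤ d2) :
    heckeOp₁ q (heckeSeries q l1 l2 c) d1 d2 = l1 * heckeSeries q l1 l2 c d1 d2 := by
  have hK := ofReal_sq_add_add_one_ne_zero hq
  have hq₁ := ofReal_sq_add_ne_zero hq
  have hq₂ := ofReal_sq_ne_zero hq
  obtain ⟨k, rfl⟩ := Nat.exists_eq_add_of_le hd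
  rcases d1 with _ | d1 <;> rcases k with _ | _ | k <;>
    simp [heckeOp₁, ← add_assoc, heckeSeries.eq_1, heckeSeries.eq_4, heckeSeries.eq_5,
      heckeSeries.eq_6, mul_div_cancel₀ _ hK, mul_div_cancel₀ _ hq₁, mul_div_cancel₀ _ hq₂] <;>
    (try split_ifs) <;> first | omega | ring

theorem heckeOp₂_heckeSeries_zero (hq : 0 < q) (d : ℕ) :
    heckeOp₂ q (heckeSeries q l1 l2 c) 0 d = l2 * heckeSeries q l1 l2 c 0 d := by
  simp only [heckeOp₂, LinearMap.coe_mk, AddHom.coe_mk, if_true]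
  rcases d with _ | d
  · rw [if_pos rfl, heckeSeries.eq_1, heckeSeries.eq_2]
    exact mul_div_cancel₀ _ (ofReal_sq_add_add_one_ne_zero hq)
  · rw [if_neg d.succ_ne_zero, heckeSeries.eq_3, mul_div_cancel₀ _ (ofReal_sq_ne_zero hq)]
    ring

theorem heckeRel_heckeSeries (hq : 0 < q) :
    HeckeRel q l1 l2 (heckeSeries q l1 l2 c) :=
  heckeRel_iff.2 fun _ _ hd => ⟨heckeOp₁_heckeSeries hq hd,
    heckeOp₂_eq_smul_of_heckeOp₁_eq_smul hq (fun _ _ => heckeOp₁_heckeSeries hq)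
      (heckeOp₂_heckeSeries_zero hq) hd⟩

end HeckeSeries

/-- for every choice of parameters `(q, λ₁, λ₂)` with `q > 1` the
solution space of the recurrence system is exactly 1-dimensional: evaluation
`f ↦ f(ε₀)` is injective (on the index set `0 ≤ d₁ ≤ d₂`) and surjective onto `ℂ`. -/
theorem stmt_11 (q : ℝ) (hq : 1 < q) (l1 l2 : ℂ) :
    (∀ c : ℂ, ∃ f : ℕ → ℕ → ℂ, HeckeRel q l1 l2 f ∧ f 0 0 = c) ∧
    (∀ f g : ℕ → ℕ → ℂ, HeckeRel q l1 l2 f → HeckeRel q l1 l2 g → f 0 0 = g 0 0 →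
      ∀ d1 d2 : ℕ, d1 ≤ d2 → f d1 d2 = g d1 d2) := by
  have hq₀ : 0 < q := zero_lt_one.trans hq
  refine ⟨fun c => ⟨heckeSeries q l1 l2 c, heckeRel_heckeSeries hq₀, heckeSeries.eq_1 ..⟩, ?_⟩
  intro f g hf hg h00 d1 d2 hd
  rw [heckeRel_iff] at hf hg
  have hfg := eq_zero_of_heckeOp_eq_smul (l1 := l1) (l2 := l2) (h := f - g) hq₀
    (fun a b hab => by simp [(hf a b hab).1, (hg a b hab).1, mul_sub])
    (fun a b hab => by simp [(hf a b hab).2, (hg a b hab).2, mul_sub])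
    (by simp [h00]) d1 d2 hd
  exact sub_eq_zero.1 hfg
end
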